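/- Let f : ℝ → ℝ be Lebesgue integrable on every compact interval such that the improper integral ∫_{-∞}^∞ f exists, and suppose there is a > 0 such that f is of bounded variation on (-∞,-a] and of bounded variation on [a,∞). Then the Fourier transform f̂(y) = ∫_{-∞}^∞ f(x)e^{−2πixy} dx exists as an improper integral for every y ∈ ℝ, and the function y ↦ f̂(y) is continuous at every point y ≠ 0. -/

import Mathlib

open MeasureTheory Filter Topology intervalIntegral

/-- The improper integral `∫_{-∞}^∞ h = L` (real-valued). -/
def HasImpInt (h : ℝ → ℝ) (L : ℝ) : Prop :=
  ∃ L₁ L₂ : ℝ,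
    Tendsto (fun c => ∫ x in c..(0:ℝ), h x) atBot (𝓝 L₁) ∧
    Tendsto (fun c => ∫ x in (0:ℝ)..c, h x) atTop (𝓝 L₂) ∧ L = L₁ + L₂

/-- The improper integral `∫_{-∞}^∞ h = z` (complex-valued). -/
def HasImpIntC (h : ℝ → ℂ) (z : ℂ) : Prop :=
  ∃ z₁ z₂ : ℂ,
    Tendsto (fun c => ∫ x in c..(0:ℝ), h x) atBot (𝓝 z₁) ∧
    Tendsto (fun c => ∫ x in (0:ℝ)..c, h x) atTop (𝓝 z₂) ∧ z = z₁ + z₂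

/-- The Fourier kernel `e^{-2πixy}`. -/
noncomputable def fourierKernel (x y : ℝ) : ℂ :=
  Complex.exp (-(2 * Real.pi * Complex.I * x * y))

/-!
On `[a, ∞)` the function `f` tends to `0` (it has a limit, and its improper integral converges),
so it is the difference of the two nonnegative antitone functions `φ₁ x = V_{[x,∞)} f` and
`φ₂ = φ₁ - f`, both tending to `0`. Bonnet's second mean value theorem, combined with
`‖∫_s^t e^{-2πixy} dx‖ ≤ 1 / (π |y|)`, bounds the tails
`‖∫_b^c f(x) e^{-2πixy} dx‖ ≤ (φ₁ b + φ₂ b) / (π |y|)` uniformly for `|y|` bounded away from `0`.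
Hence the truncated transforms, which are continuous in `y`, converge locally uniformly on
`y ≠ 0`; at `y = 0` their limit is the improper integral of `f`. The negative half-line is the
same statement for `x ↦ f (-x)`.
-/

open Set Real

section

variable {E : Type*} [NormedAddCommGroup E] [NormedSpace ℝ E] [CompleteSpace E]

theorem eq_zero_of_tendsto_of_tendsto_intervalIntegral {f : ℝ → E} {ℓ L : E}
    (hfloc : ∀ c d, IntervalIntegrable f volume c d) (hf : Tendsto f atTop (𝓝 ℓ))
    (hL : Tendsto (fun c => ∫ x in (0:ℝ)..c, f x) atTop (𝓝 L)) : ℓ = 0 := by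
  have hshift : Tendsto (fun c => ∫ x in c..c + 1, f x) atTop (𝓝 0) := by
    have := (hL.comp (tendsto_atTop_add_const_right atTop 1 tendsto_id)).sub hL
    rw [sub_self] at this
    exact this.congr fun c => integral_interval_sub_left (hfloc 0 (c + 1)) (hfloc 0 c)
  have hmean : Tendsto (fun c => ∫ x in c..c + 1, f x) atTop (𝓝 ℓ) := by
    rw [Metric.tendsto_atTop]
    intro ε hε
    obtain ⟨N, hN⟩ := Metric.tendsto_atTop.1 hf (ε / 2) (half_pos hε)
    refine ⟨N, fun c hc => ?_⟩
    have hdiff : (∫ x in c..c + 1, f x) - ℓ = ∫ x in c..c + 1, (f x - ℓ) := by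
      simp [integral_sub (hfloc _ _) intervalIntegrable_const]
    have hbound : ∀ x ∈ uIoc c (c + 1), ‖f x - ℓ‖ ≤ ε / 2 := fun x hx => by
      rw [uIoc_of_le (by linarith)] at hx
      exact (dist_eq_norm (f x) ℓ ▸ hN x (hc.trans hx.1.le)).le
    calc dist (∫ x in c..c + 1, f x) ℓ
        ≤ ε / 2 * |c + 1 - c| := by
          rw [dist_eq_norm, hdiff]
          exact norm_integral_le_of_norm_le_const hbound
      _ < ε := by rw [add_sub_cancel_left, abs_one, mul_one]; linarith
  exact tendsto_nhds_unique hmean hshift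

theorem BoundedVariationOn.tendsto_atTop_zero_of_tendsto_intervalIntegral {f : ℝ → E}
    {a : ℝ} {L : E} (hf : BoundedVariationOn f (Ici a))
    (hfloc : ∀ c d, IntervalIntegrable f volume c d)
    (hL : Tendsto (fun c => ∫ x in (0:ℝ)..c, f x) atTop (𝓝 L)) : Tendsto f atTop (𝓝 0) := by
  obtain ⟨ℓ, hℓ⟩ := hf.exists_tendsto_atTop
  rw [inf_eq_right.2 (le_principal_iff.2 (Ici_mem_atTop a))] at hℓ
  rwa [← eq_zero_of_tendsto_of_tendsto_intervalIntegral hfloc hℓ hL]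

theorem edist_add_eVariationOn_Ici_le {α F : Type*} [LinearOrder α] [PseudoEMetricSpace F]
    (f : α → F) {x y : α} (hxy : x ≤ y) :
    edist (f x) (f y) + eVariationOn f (Ici y) ≤ eVariationOn f (Ici x) := by
  rw [← Icc_union_Ici_eq_Ici hxy, eVariationOn.union f (isGreatest_Icc hxy) isLeast_Ici]
  gcongr
  exact eVariationOn.edist_le f (left_mem_Icc.2 hxy) (right_mem_Icc.2 hxy)

theorem BoundedVariationOn.exists_antitone_sub_antitone {f : ℝ → ℝ} {a : ℝ}
    (hf : BoundedVariationOn f (Ici a)) (hf0 : Tendsto f atTop (𝓝 0)) :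
    ∃ φ₁ φ₂ : ℝ → ℝ, Antitone φ₁ ∧ Antitone φ₂ ∧ Tendsto φ₁ atTop (𝓝 0) ∧
      Tendsto φ₂ atTop (𝓝 0) ∧ EqOn f (φ₁ - φ₂) (Ici a) := by
  set T : ℝ → ℝ := fun x => (eVariationOn f (Ici (max a x))).toReal
  have hfin : ∀ x, eVariationOn f (Ici (max a x)) ≠ ⊤ := fun x =>
    ne_top_of_le_ne_top hf (eVariationOn.mono f (Ici_subset_Ici.2 (le_max_left a x)))
  have htail : ∀ x y, x ≤ y → |f (max a x) - f (max a y)| + T y ≤ T x := by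
    intro x y hxy
    have := ENNReal.toReal_mono (hfin x)
      (edist_add_eVariationOn_Ici_le f (max_le_max_left a hxy))
    rwa [ENNReal.toReal_add (edist_ne_top _ _) (hfin y), edist_dist, Real.dist_eq,
      ENNReal.toReal_ofReal (abs_nonneg _)] at this
  have hT : Tendsto T atTop (𝓝 0) := by
    have := hf.tendsto_eVariationOn_Ici_zero
    simp only [inf_eq_right.2 (le_principal_iff.2 (Ici_mem_atTop a)), Ici_inter_Ici] at this
    exact (ENNReal.tendsto_toReal ENNReal.zero_ne_top).comp this
  have hmax : Tendsto (fun x => max a x) atTop atTop :=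
    tendsto_atTop_mono (le_max_right a) tendsto_id
  refine ⟨T, fun x => T x - f (max a x), fun x y hxy => ?_, fun x y hxy => ?_, hT, ?_,
    fun x hx => ?_⟩
  · linarith [htail x y hxy, abs_nonneg (f (max a x) - f (max a y))]
  · linarith [htail x y hxy, le_abs_self (f (max a x) - f (max a y))]
  · simpa using hT.sub (hf0.comp hmax)
  · simp [max_eq_right (mem_Ici.1 hx)]

theorem Monotone.ae_eq_rightLim {ψ : ℝ → ℝ} (hψ : Monotone ψ) (μ : Measure ℝ)
    [NullSingletonClass μ] : ψ =ᵐ[μ] Function.rightLim ψ := by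
  filter_upwards [hψ.countable_not_continuousAt.ae_notMem μ] with x hx
  exact (rightLim_eq_of_tendsto ((not_not.1 hx).tendsto.mono_left nhdsWithin_le_nhds)).symm

theorem norm_setIntegral_measureReal_Ioc_smul_le (ν : Measure ℝ) [IsLocallyFiniteMeasure ν]
    {K : ℝ → E} {b c M : ℝ} (hK : IntegrableOn K (Ioc b c))
    (hKM : ∀ t ∈ Ioc b c, ‖∫ x in b..t, K x‖ ≤ M) :
    ‖∫ x in Ioc b c, ν.real (Ioc x c) • K x‖ ≤ M * ν.real (Ioc b c) := by
  have : IsFiniteMeasure (ν.restrict (Ioc b c)) :=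
    isFiniteMeasure_restrict.2 measure_Ioc_lt_top.ne
  -- Fubini for `(x, t) ↦ 1_{x < t} K x` over `(b, c]²` with respect to `volume ⊗ ν`.
  set T : Set (ℝ × ℝ) := {p | p.1 < p.2}
  have hint : Integrable (T.indicator fun p => K p.1)
      ((volume.restrict (Ioc b c)).prod (ν.restrict (Ioc b c))) :=
    (hK.comp_fst _).indicator (measurableSet_lt measurable_fst measurable_snd)
  have hinner : ∀ x ∈ Ioc b c,
      ∫ t in Ioc b c, T.indicator (fun p => K p.1) (x, t) ∂ν = ν.real (Ioc x c) • K x := by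
    intro x hx
    have hsec : (fun t => T.indicator (fun p => K p.1) (x, t)) =
        (Ioi x).indicator fun _ => K x := by
      ext t; by_cases h : x < t <;> simp [T, indicator, h]
    rw [hsec, integral_indicator_const _ measurableSet_Ioi,
      measureReal_restrict_apply measurableSet_Ioi, inter_comm, Ioc_inter_Ioi,
      max_eq_right hx.1.le]
  have houter : ∀ t ∈ Ioc b c,
      ∫ x in Ioc b c, T.indicator (fun p => K p.1) (x, t) = ∫ x in b..t, K x := by
    intro t ht
    have hsec : (fun x => T.indicator (fun p => K p.1) (x, t)) = (Iio t).indicator K := by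
      ext x; by_cases h : x < t <;> simp [T, indicator, h]
    have hIoo : Iio t ∩ Ioc b c = Ioo b t := by
      ext x; simp only [mem_inter_iff, mem_Iio, mem_Ioc, mem_Ioo]
      constructor
      · exact fun h => ⟨h.2.1, h.1⟩
      · exact fun h => ⟨h.2, h.1, h.2.le.trans ht.2⟩
    rw [hsec, MeasureTheory.integral_indicator measurableSet_Iio,
      Measure.restrict_restrict measurableSet_Iio, hIoo, integral_of_le ht.1.le,
      integral_Ioc_eq_integral_Ioo]
  calc ‖∫ x in Ioc b c, ν.real (Ioc x c) • K x‖
      = ‖∫ t in Ioc b c, (∫ x in Ioc b c, T.indicator (fun p => K p.1) (x, t)) ∂ν‖ := by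
        rw [← integral_integral_swap (f := fun x t => T.indicator (fun p => K p.1) (x, t)) hint,
          setIntegral_congr_fun measurableSet_Ioc hinner]
    _ = ‖∫ t in Ioc b c, (∫ x in b..t, K x) ∂ν‖ := by
        rw [setIntegral_congr_fun measurableSet_Ioc houter]
    _ ≤ M * ν.real (Ioc b c) := by
        rw [← measureReal_restrict_apply_univ]
        refine norm_integral_le_of_norm_le_const ?_
        filter_upwards [ae_restrict_mem measurableSet_Ioc] with t ht using hKM t ht

theorem norm_intervalIntegral_smul_le_of_antitone {φ : ℝ → ℝ} (hφ : Antitone φ)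
    (hφ0 : ∀ x, 0 ≤ φ x) {K : ℝ → E} {b c M : ℝ} (hbc : b ≤ c) (hK : IntegrableOn K (Ioc b c))
    (hKM : ∀ t ∈ Icc b c, ‖∫ x in b..t, K x‖ ≤ M) :
    ‖∫ x in b..c, φ x • K x‖ ≤ M * φ b := by
  have hM : 0 ≤ M := by simpa using hKM b (left_mem_Icc.2 hbc)
  -- Up to a null set `φ = -σ` for the Stieltjes function `σ` of `-φ`, and on `(b, c]`
  -- `-σ x = -σ c + σ.measure (Ioc x c)`.
  have hψ : Monotone fun x => -φ x := hφ.neg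
  set σ := hψ.stieltjesFunction
  have hσ : ∀ x, σ x = Function.rightLim (fun x => -φ x) x := hψ.stieltjesFunction_eq
  have hφσ : ∀ᵐ x, φ x = -σ x := by
    filter_upwards [hψ.ae_eq_rightLim volume] with x hx
    rw [hσ, ← hx, neg_neg]
  have hσc : 0 ≤ -σ c := by
    have := hψ.rightLim_le (lt_add_one c)
    rw [← hσ] at this
    linarith [hφ0 (c + 1)]
  have hσb : -σ b ≤ φ b := by
    have := hψ.le_rightLim (le_refl b)
    rw [← hσ] at this
    linarith
  have hν : ∀ x ≤ c, σ.measure.real (Ioc x c) = σ c - σ x := fun x hx => by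
    rw [measureReal_def, σ.measure_Ioc, ENNReal.toReal_ofReal (sub_nonneg.2 (σ.mono hx))]
  have hint : IntegrableOn (fun x => σ.measure.real (Ioc x c) • K x) (Ioc b c) := by
    refine hK.bdd_smul (σ c - σ b) ?_ ?_
    · exact (Antitone.measurable fun x y hxy =>
        measureReal_mono (Ioc_subset_Ioc_left hxy) measure_Ioc_lt_top.ne).aestronglyMeasurable
    · filter_upwards [ae_restrict_mem measurableSet_Ioc] with x hx
      rw [hν x hx.2, Real.norm_of_nonneg (sub_nonneg.2 (σ.mono hx.2))]
      linarith [σ.mono hx.1.le]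
  have hsplit : ∫ x in b..c, φ x • K x =
      (-σ c) • (∫ x in Ioc b c, K x) + ∫ x in Ioc b c, σ.measure.real (Ioc x c) • K x := by
    rw [integral_of_le hbc, ← MeasureTheory.integral_smul,
      ← integral_add (f := fun x => (-σ c) • K x) (hK.smul _) hint]
    refine integral_congr_ae ?_
    filter_upwards [ae_restrict_of_ae hφσ, ae_restrict_mem measurableSet_Ioc] with x hx hxI
    rw [hx, hν x hxI.2, ← add_smul]
    ring_nf
  calc ‖∫ x in b..c, φ x • K x‖
      ≤ -σ c * M + M * σ.measure.real (Ioc b c) := by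
        rw [hsplit]
        refine (norm_add_le _ _).trans (add_le_add ?_ ?_)
        · rw [norm_smul, Real.norm_of_nonneg hσc, ← integral_of_le hbc]
          exact mul_le_mul_of_nonneg_left (hKM c (right_mem_Icc.2 hbc)) hσc
        · exact norm_setIntegral_measureReal_Ioc_smul_le σ.measure hK
            fun t ht => hKM t (Ioc_subset_Icc_self ht)
    _ = M * -σ b := by rw [hν b hbc]; ring
    _ ≤ M * φ b := mul_le_mul_of_nonneg_left hσb hM

end

theorem uniformCauchySeqOn_of_dist_le {ι α β : Type*} [SemilatticeSup ι] [Nonempty ι]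
    [PseudoMetricSpace β] {F : ι → α → β} {s : Set α} {g : ι → ℝ} (hg : Tendsto g atTop (𝓝 0))
    (hFg : ∀ᶠ b in atTop, ∀ c ≥ b, ∀ y ∈ s, dist (F c y) (F b y) ≤ g b) :
    UniformCauchySeqOn F atTop s := by
  rw [Metric.uniformCauchySeqOn_iff]
  intro ε hε
  obtain ⟨N, hN⟩ := eventually_atTop.1 (hFg.and (hg.eventually (gt_mem_nhds (half_pos hε))))
  obtain ⟨hFN, hgN⟩ := hN N le_rfl
  refine ⟨N, fun m hm n hn y hy => ?_⟩
  calc dist (F m y) (F n y) ≤ dist (F m y) (F N y) + dist (F n y) (F N y) :=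
        dist_triangle_right _ _ _
    _ ≤ g N + g N := add_le_add (hFN m hm y hy) (hFN n hn y hy)
    _ < ε := by linarith

theorem fourierKernel_eq_exp_mul (x y : ℝ) :
    fourierKernel x y = Complex.exp ((-2 * π * y : ℝ) * Complex.I * x) := by
  unfold fourierKernel; push_cast; ring_nf

theorem norm_fourierKernel (x y : ℝ) : ‖fourierKernel x y‖ = 1 := by
  simp [fourierKernel_eq_exp_mul, Complex.norm_exp]

theorem fourierKernel_neg (x y : ℝ) : fourierKernel (-x) y = fourierKernel x (-y) := by
  unfold fourierKernel; push_cast; ring_nf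

theorem continuous_fourierKernel_left (y : ℝ) : Continuous (fourierKernel · y) := by
  unfold fourierKernel; fun_prop

theorem continuous_fourierKernel_right (x : ℝ) : Continuous (fourierKernel x) := by
  unfold fourierKernel; fun_prop

theorem norm_intervalIntegral_fourierKernel_le {y : ℝ} (hy : y ≠ 0) (s t : ℝ) :
    ‖∫ x in s..t, fourierKernel x y‖ ≤ 1 / (π * |y|) := by
  set w : ℂ := (-2 * π * y : ℝ) * Complex.I
  have hw : w ≠ 0 := by simp [w, hy, pi_ne_zero]
  have hnw : ‖w‖ = 2 * π * |y| := by simp [w, abs_of_pos pi_pos]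
  have hexp : ∀ u : ℝ, ‖Complex.exp (w * u)‖ = 1 := fun u => by
    rw [← norm_fourierKernel u y, fourierKernel_eq_exp_mul]
  simp only [fourierKernel_eq_exp_mul]
  rw [integral_exp_mul_complex hw, norm_div, hnw]
  calc ‖Complex.exp (w * t) - Complex.exp (w * s)‖ / (2 * π * |y|)
      ≤ 2 / (2 * π * |y|) := by
        gcongr
        exact (norm_sub_le _ _).trans (by rw [hexp, hexp]; norm_num)
    _ = 1 / (π * |y|) := by field_simp

theorem IntervalIntegrable.mul_fourierKernel {f : ℝ → ℝ} {b c : ℝ}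
    (hf : IntervalIntegrable f volume b c) (y : ℝ) :
    IntervalIntegrable (fun x => (f x : ℂ) * fourierKernel x y) volume b c :=
  IntervalIntegrable.mul_continuousOn ⟨hf.1.ofReal, hf.2.ofReal⟩
    (continuous_fourierKernel_left y).continuousOn

theorem continuous_intervalIntegral_mul_fourierKernel {f : ℝ → ℝ} {b c : ℝ}
    (hf : IntervalIntegrable f volume b c) :
    Continuous fun y => ∫ x in b..c, (f x : ℂ) * fourierKernel x y :=
  continuous_of_dominated_interval (bound := fun x => ‖f x‖)
    (fun y => (hf.mul_fourierKernel y).def'.aestronglyMeasurable)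
    (fun y => ae_of_all _ fun x _ => by
      rw [norm_mul, norm_fourierKernel, mul_one, Complex.norm_real])
    hf.norm (ae_of_all _ fun x _ => continuous_const.mul (continuous_fourierKernel_right x))

theorem norm_intervalIntegral_mul_fourierKernel_le_of_antitone {φ : ℝ → ℝ} (hφ : Antitone φ)
    (hφ0 : ∀ x, 0 ≤ φ x) {y b c : ℝ} (hy : y ≠ 0) (hbc : b ≤ c) :
    ‖∫ x in b..c, (φ x : ℂ) * fourierKernel x y‖ ≤ φ b / (π * |y|) := by
  simp_rw [← Complex.real_smul]
  rw [← one_div_mul_eq_div]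
  exact norm_intervalIntegral_smul_le_of_antitone hφ hφ0 hbc
    (continuous_fourierKernel_left y).integrableOn_Ioc
    fun t _ => norm_intervalIntegral_fourierKernel_le hy b t

theorem uniformCauchySeqOn_intervalIntegral_mul_fourierKernel {f : ℝ → ℝ} {a r : ℝ}
    (hfloc : ∀ c d, IntervalIntegrable f volume c d) (hf : BoundedVariationOn f (Ici a))
    (hf0 : Tendsto f atTop (𝓝 0)) (hr : 0 < r) :
    UniformCauchySeqOn (fun c y => ∫ x in (0:ℝ)..c, (f x : ℂ) * fourierKernel x y) atTop
      {y | r ≤ |y|} := by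
  obtain ⟨φ₁, φ₂, h₁, h₂, h₁0, h₂0, hfφ⟩ := hf.exists_antitone_sub_antitone hf0
  have hφ₁ := h₁.le_of_tendsto h₁0
  have hφ₂ := h₂.le_of_tendsto h₂0
  refine uniformCauchySeqOn_of_dist_le (g := fun b => (φ₁ b + φ₂ b) / (π * r))
    (by simpa using (h₁0.add h₂0).div_const (π * r)) ?_
  filter_upwards [eventually_ge_atTop a] with b hab c hbc y (hy : r ≤ |y|)
  have hy0 : y ≠ 0 := abs_pos.1 (hr.trans_le hy)
  have heq : EqOn (fun x => (f x : ℂ) * fourierKernel x y)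
      (fun x => (φ₁ x : ℂ) * fourierKernel x y - (φ₂ x : ℂ) * fourierKernel x y)
      (uIcc b c) := by
    intro x hx
    rw [uIcc_of_le hbc] at hx
    simp [hfφ (mem_Ici.2 (hab.trans hx.1)), sub_mul]
  rw [dist_eq_norm, integral_interval_sub_left ((hfloc 0 c).mul_fourierKernel y)
    ((hfloc 0 b).mul_fourierKernel y), integral_congr heq,
    integral_sub (h₁.intervalIntegrable.mul_fourierKernel y)
      (h₂.intervalIntegrable.mul_fourierKernel y)]
  calc _ ≤ φ₁ b / (π * |y|) + φ₂ b / (π * |y|) :=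
        (norm_sub_le _ _).trans (add_le_add
          (norm_intervalIntegral_mul_fourierKernel_le_of_antitone h₁ hφ₁ hy0 hbc)
          (norm_intervalIntegral_mul_fourierKernel_le_of_antitone h₂ hφ₂ hy0 hbc))
    _ ≤ (φ₁ b + φ₂ b) / (π * r) := by
        rw [← add_div]
        gcongr
        linarith [hφ₁ b, hφ₂ b]

theorem exists_tendsto_intervalIntegral_mul_fourierKernel {f : ℝ → ℝ} {a L : ℝ}
    (hfloc : ∀ c d, IntervalIntegrable f volume c d)
    (hL : Tendsto (fun c => ∫ x in (0:ℝ)..c, f x) atTop (𝓝 L))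
    (hf : BoundedVariationOn f (Ici a)) :
    ∃ S : ℝ → ℂ,
      (∀ y, Tendsto (fun c => ∫ x in (0:ℝ)..c, (f x : ℂ) * fourierKernel x y) atTop
        (𝓝 (S y))) ∧
      ∀ y ≠ 0, ContinuousAt S y := by
  have hcauchy : ∀ y ≠ 0, UniformCauchySeqOn
      (fun c z => ∫ x in (0:ℝ)..c, (f x : ℂ) * fourierKernel x z) atTop {z | |y| / 2 ≤ |z|} :=
    fun y hy => uniformCauchySeqOn_intervalIntegral_mul_fourierKernel hfloc hf
      (hf.tendsto_atTop_zero_of_tendsto_intervalIntegral hfloc hL) (half_pos (abs_pos.2 hy))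
  have hlim : ∀ y, ∃ z, Tendsto (fun c => ∫ x in (0:ℝ)..c, (f x : ℂ) * fourierKernel x y)
      atTop (𝓝 z) := by
    intro y
    rcases eq_or_ne y 0 with rfl | hy
    · exact ⟨L, by simpa [fourierKernel, integral_ofReal] using hL.ofReal⟩
    · exact cauchy_map_iff_exists_tendsto.1 ((hcauchy y hy).cauchy_map
        (half_le_self (abs_nonneg y) : |y| / 2 ≤ |y|))
  choose S hS using hlim
  refine ⟨S, hS, fun y hy => ?_⟩
  have hnhds : {z | |y| / 2 ≤ |z|} ∈ 𝓝 y :=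
    mem_of_superset ((isOpen_lt continuous_const continuous_abs).mem_nhds
      (half_lt_self (abs_pos.2 hy))) fun z (hz : |y| / 2 < |z|) => hz.le
  exact (((hcauchy y hy).tendstoUniformlyOn_of_tendsto fun z _ => hS z).continuousOn
    (Frequently.of_forall fun c => (continuous_intervalIntegral_mul_fourierKernel
      (hfloc 0 c)).continuousOn)).continuousAt hnhds

theorem fourier_transform_continuous_away_from_zero_general (f : ℝ → ℝ) (a : ℝ)
    (hfloc : ∀ c d : ℝ, IntervalIntegrable f volume c d)
    (hfimp : ∃ L : ℝ, HasImpInt f L)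
    (hBV₁ : BoundedVariationOn f (Set.Iic (-a)))
    (hBV₂ : BoundedVariationOn f (Set.Ici a)) :
    ∃ Ff : ℝ → ℂ,
      (∀ y : ℝ, HasImpIntC (fun x => (f x : ℂ) * fourierKernel x y) (Ff y)) ∧
      (∀ y : ℝ, y ≠ 0 → ContinuousAt Ff y) := by
  obtain ⟨-, L₁, L₂, h₁, h₂, -⟩ := hfimp
  have hgloc : ∀ c d, IntervalIntegrable (fun x => f (-x)) volume c d := fun c d => by
    simpa using (IntervalIntegrable.iff_comp_neg (f := f)).1 (hfloc (-c) (-d))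
  have hgL : Tendsto (fun c => ∫ x in (0:ℝ)..c, f (-x)) atTop (𝓝 L₁) := by
    refine (h₁.comp tendsto_neg_atTop_atBot).congr fun c => ?_
    simp [integral_comp_neg]
  have hgBV : BoundedVariationOn (fun x => f (-x)) (Ici a) := by
    rw [BoundedVariationOn, ← Function.comp_def, eVariationOn.comp_eq_of_antitoneOn f Neg.neg
      fun _ _ _ _ h => neg_le_neg h, image_neg_Ici]
    exact hBV₁
  obtain ⟨Spos, hSpos, hSposc⟩ :=
    exists_tendsto_intervalIntegral_mul_fourierKernel hfloc h₂ hBV₂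
  obtain ⟨Sneg, hSneg, hSnegc⟩ :=
    exists_tendsto_intervalIntegral_mul_fourierKernel hgloc hgL hgBV
  refine ⟨fun y => Sneg (-y) + Spos y, fun y => ⟨Sneg (-y), Spos y, ?_, hSpos y, rfl⟩,
    fun y hy => ?_⟩
  · refine ((hSneg (-y)).comp tendsto_neg_atBot_atTop).congr fun c => ?_
    simp [← fourierKernel_neg, integral_comp_neg (fun x => (f x : ℂ) * fourierKernel x y)]
  · exact ((hSnegc (-y) (neg_ne_zero.2 hy)).comp continuousAt_neg).add (hSposc y hy)

/-- **Continuity of the Fourier transform away from the origin.** If `f` is Lebesgue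
integrable on every compact interval, its improper integral over `ℝ` exists, and `f` is
of bounded variation on `(-∞,-a]` and on `[a,∞)` for some `a > 0`, then `f̂(y)` exists
for every `y` and `y ↦ f̂(y)` is continuous at every `y ≠ 0`. -/
theorem fourier_transform_continuous_away_from_zero (f : ℝ → ℝ) (a : ℝ) (ha : 0 < a)
    (hfloc : ∀ c d : ℝ, IntervalIntegrable f volume c d)
    (hfimp : ∃ L : ℝ, HasImpInt f L)
    (hBV₁ : BoundedVariationOn f (Set.Iic (-a)))
    (hBV₂ : BoundedVariationOn f (Set.Ici a)) :
    ∃ Ff : ℝ → ℂ,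
      (∀ y : ℝ, HasImpIntC (fun x => (f x : ℂ) * fourierKernel x y) (Ff y)) ∧
      (∀ y : ℝ, y ≠ 0 → ContinuousAt Ff y) :=
  fourier_transform_continuous_away_from_zero_general f a hfloc hfimp hBV₁ hBV₂
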